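/- Let Γ be the block companion-type matrix whose first block row is Q K^N O_N^{-1} and whose remaining block rows shift. If μ ≠ 0 is an eigenvalue of K with eigenvector w, then the vector w̃ = (μ^{N-1} Q w; μ^{N-2} Q w; ...; Q w) is an eigenvector of Γ with the same eigenvalue μ. -/
import Mathlib


open Matrix

/-- Let `Γ` be the block companion-type matrix whose first block row is `Q K^N O_N⁻¹`
and whose remaining block rows realize the shift. If `μ ≠ 0` is an eigenvalue of `K`
with eigenvector `w`, then `w̃ = (μ^(N-1) Q w; μ^(N-2) Q w; …; Q w)` is an eigenvector
of `Γ` with the same eigenvalue `μ`. -/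
theorem companion_eigenvector_of_K {N q : ℕ}
    (K : Matrix (Fin N × Fin q) (Fin N × Fin q) ℂ)
    (Q : Matrix (Fin q) (Fin N × Fin q) ℂ)
    (O : Matrix (Fin N × Fin q) (Fin N × Fin q) ℂ)
    (hO : O = Matrix.of (fun (i : Fin N × Fin q) (k : Fin N × Fin q) =>
      (Q * K ^ (N - 1 - i.1.val)) i.2 k))
    (hOunit : IsUnit O.det)
    (Γ : Matrix (Fin N × Fin q) (Fin N × Fin q) ℂ)
    (hΓ : ∀ a b : Fin N × Fin q,
      Γ a b = if a.1.val = 0 then (Q * K ^ N * O⁻¹) a.2 b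
        else if b.1.val = a.1.val - 1 ∧ b.2 = a.2 then 1 else 0)
    (μ : ℂ) (hμ : μ ≠ 0) (w : Fin N × Fin q → ℂ) (hw : w ≠ 0)
    (hKw : K *ᵥ w = μ • w) :
    (fun a : Fin N × Fin q => μ ^ (N - 1 - a.1.val) * (Q *ᵥ w) a.2) ≠ 0 ∧
      Γ *ᵥ (fun a : Fin N × Fin q => μ ^ (N - 1 - a.1.val) * (Q *ᵥ w) a.2) =
        μ • (fun a : Fin N × Fin q => μ ^ (N - 1 - a.1.val) * (Q *ᵥ w) a.2) := by
  set v : Fin q → ℂ := Q *ᵥ w with hv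
  set wt : Fin N × Fin q → ℂ := fun a => μ ^ (N - 1 - a.1.val) * v a.2 with hwt
  have hKpow : ∀ n : ℕ, K ^ n *ᵥ w = μ ^ n • w := by
    intro n
    induction n with
    | zero => simp
    | succ n ih =>
      rw [pow_succ, ← mulVec_mulVec, hKw, mulVec_smul, ih, smul_smul]
      congr 1; ring
  have hOw : O *ᵥ w = wt := by
    funext a
    have h1 : (O *ᵥ w) a = ((Q * K ^ (N - 1 - a.1.val)) *ᵥ w) a.2 := by
      simp only [hO, mulVec, dotProduct, of_apply]
    rw [h1, ← mulVec_mulVec, hKpow, mulVec_smul]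
    simp [hwt, hv]
  have hinv : O⁻¹ *ᵥ wt = w := by
    rw [← hOw, mulVec_mulVec, Matrix.nonsing_inv_mul O hOunit, one_mulVec]
  have hwtne : wt ≠ 0 := by
    intro h
    apply hw
    rw [← hinv, h, mulVec_zero]
  refine ⟨hwtne, ?_⟩
  funext a
  simp only [Pi.smul_apply, smul_eq_mul]
  rcases Nat.eq_zero_or_pos a.1.val with h0 | hpos
  · have hN : 0 < N := a.1.pos
    have e1 : (Γ *ᵥ wt) a = ((Q * K ^ N * O⁻¹) *ᵥ wt) a.2 := by
      simp only [mulVec, dotProduct]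
      refine Finset.sum_congr rfl fun b _ => ?_
      rw [hΓ, if_pos h0]
    rw [e1, ← mulVec_mulVec, ← mulVec_mulVec, hinv, hKpow, mulVec_smul]
    simp only [hwt, Pi.smul_apply, smul_eq_mul, h0, Nat.sub_zero, ← hv]
    rw [← mul_assoc, ← pow_succ']
    rw [Nat.sub_add_cancel hN]
  · set c : Fin N × Fin q := (⟨a.1.val - 1, lt_trans (Nat.pred_lt hpos.ne') a.1.isLt⟩, a.2) with hc
    have e1 : (Γ *ᵥ wt) a = wt c := by
      simp only [mulVec, dotProduct]
      rw [Finset.sum_eq_single c]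
      · rw [hΓ, if_neg (hpos.ne'), if_pos ⟨rfl, rfl⟩, one_mul]
      · intro b _ hb
        rw [hΓ, if_neg (hpos.ne'), if_neg, zero_mul]
        rintro ⟨h1, h2⟩
        apply hb
        rw [hc]
        exact Prod.ext (Fin.ext h1) h2
      · intro h; exact absurd (Finset.mem_univ c) h
    rw [e1]
    simp only [hwt, hc]
    rw [← mul_assoc, ← pow_succ']
    congr 2
    omega
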